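/- Let A be a unital k-algebra and let S be a commutative associative unital k-algebra. Then the map ψ : C(A)⊗S → C(A⊗S), determined by ψ(γ⊗s) = γ⊗L_s, is an isomorphism of associative algebras. -/

import Mathlib

open TensorProduct

set_option synthInstance.maxHeartbeats 1000000
set_option maxHeartbeats 2000000

noncomputable section

/-- The set of derivations of a (possibly non-associative, non-unital) `k`-algebra `B`,
as a submodule of `Module.End k B`. -/
def Derivations (k B : Type) [Field k] [NonUnitalNonAssocSemiring B] [Module k B]
    [SMulCommClass k B B] [IsScalarTower k B B] :
    Submodule k (Module.End k B) where
  carrier := {d | ∀ x y : B, d (x * y) = d x * y + x * d y}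
  add_mem' := by
    intro f g hf hg x y
    simp only [LinearMap.add_apply, hf x y, hg x y, add_mul, mul_add]
    abel
  zero_mem' := by intro x y; simp
  smul_mem' := by
    intro c f hf x y
    simp only [LinearMap.smul_apply, hf x y, smul_add, smul_mul_assoc, mul_smul_comm]

/-- The centroid of a (possibly non-associative, non-unital) `k`-algebra `B`, as a
subalgebra of `Module.End k B`. -/
def centroid (k B : Type) [Field k] [NonUnitalNonAssocSemiring B] [Module k B]
    [SMulCommClass k B B] [IsScalarTower k B B] :
    Subalgebra k (Module.End k B) where
  carrier := {γ | ∀ x y : B, γ (x * y) = γ x * y ∧ γ (x * y) = x * γ y}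
  mul_mem' := by
    intro γ δ hγ hδ x y
    constructor
    · show γ (δ (x * y)) = γ (δ x) * y
      rw [(hδ x y).1, (hγ (δ x) y).1]
    · show γ (δ (x * y)) = x * γ (δ y)
      rw [(hδ x y).2, (hγ x (δ y)).2]
  one_mem' := by intro x y; exact ⟨rfl, rfl⟩
  add_mem' := by
    intro γ δ hγ hδ x y
    constructor
    · simp [LinearMap.add_apply, (hγ x y).1, (hδ x y).1, add_mul]
    · simp [LinearMap.add_apply, (hγ x y).2, (hδ x y).2, mul_add]
  zero_mem' := by intro x y; simp
  algebraMap_mem' := by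
    intro c x y
    constructor
    · simp [Module.algebraMap_end_apply, smul_mul_assoc]
    · simp [Module.algebraMap_end_apply, mul_smul_comm]

/-- A `k`-algebra is perfect if it is spanned by products. -/
def IsPerfectAlg (k B : Type) [Field k] [NonUnitalNonAssocSemiring B] [Module k B] : Prop :=
  Submodule.span k {z : B | ∃ x y : B, x * y = z} = ⊤

/-- The natural map `ψ : C(A) ⊗ S → End(A ⊗ S)`, `γ ⊗ s ↦ γ ⊗ L_s`. -/
def psi (k A S : Type) [Field k] [NonUnitalNonAssocRing A] [Module k A]
    [SMulCommClass k A A] [IsScalarTower k A A] [CommRing S] [Algebra k S] :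
    (↥(centroid k A) ⊗[k] S) →ₗ[k] Module.End k (A ⊗[k] S) :=
  (TensorProduct.homTensorHomMap (RingHom.id k) A S A S).comp
    (TensorProduct.map (centroid k A).val.toLinearMap (LinearMap.mul k S))
/-- `B` is finitely generated as a module over a set `Γ` of `k`-linear endomorphisms
(e.g. over its centroid or differential centroid). -/
def FGOverSet (k B : Type) [Field k] [AddCommMonoid B] [Module k B]
    (Γ : Set (Module.End k B)) : Prop :=
  ∃ (n : ℕ) (a : Fin n → B), ∀ x : B, ∃ γ : Fin n → Module.End k B,
    (∀ i, γ i ∈ Γ) ∧ x = ∑ i, γ i (a i)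

/-!
In a unital algebra every element of the centroid is right multiplication by its value at `1`,
so `γ ↦ γ 1` embeds `C(A)` into `A`, with image the `a` for which right multiplication by `a`
lies in the centroid. Evaluating `ψ(u)` at `1 ⊗ 1` gives the image of `u` under this embedding
tensored with `S`, which is injective because `S` is flat over the field `k`. Conversely an
element `T` of `C(A ⊗ S)` is right multiplication by `c = T (1 ⊗ 1)`; writing `c = ∑ cᵢ ⊗ bᵢ`
in a basis `(bᵢ)` of `S` and testing the centroid identities on `x ⊗ 1`, `y ⊗ 1` shows that each
right multiplication by `cᵢ` lies in `C(A)`, so `T` and `ψ(∑ R_{cᵢ} ⊗ bᵢ)` are two elements of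
the centroid agreeing at `1`. Multiplicativity holds because `ψ` factors through the algebra
map `End A ⊗ End S → End (A ⊗ S)`.
-/

section Centroid

variable {k B : Type} [Field k] [NonAssocSemiring B] [Module k B] [SMulCommClass k B B]
  [IsScalarTower k B B]

theorem eq_mulRight_of_mem_centroid {γ : Module.End k B} (hγ : γ ∈ centroid k B) :
    γ = LinearMap.mulRight k (γ 1) :=
  LinearMap.ext fun x => by simpa using (hγ x 1).2

theorem eq_of_mem_centroid_of_apply_one {γ δ : Module.End k B} (hγ : γ ∈ centroid k B)
    (hδ : δ ∈ centroid k B) (h : γ 1 = δ 1) : γ = δ := by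
  rw [eq_mulRight_of_mem_centroid hγ, eq_mulRight_of_mem_centroid hδ, h]

variable (k B) in
def centroidEvalOne : centroid k B →ₗ[k] B :=
  (LinearMap.applyₗ 1).comp (centroid k B).val.toLinearMap

@[simp]
theorem centroidEvalOne_apply (γ : centroid k B) :
    centroidEvalOne k B γ = (γ : Module.End k B) 1 :=
  rfl

theorem centroidEvalOne_injective : Function.Injective (centroidEvalOne k B) :=
  fun γ δ h => Subtype.ext (eq_of_mem_centroid_of_apply_one γ.2 δ.2 h)

end Centroid

theorem mulLeft_mem_centroid {k S : Type} [Field k] [NonUnitalCommSemiring S] [Module k S]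
    [SMulCommClass k S S] [IsScalarTower k S S] (s : S) :
    LinearMap.mulLeft k s ∈ centroid k S :=
  fun x y => ⟨(mul_assoc s x y).symm, mul_left_comm s x y⟩

theorem map_mem_centroid {k A B : Type} [Field k]
    [NonUnitalNonAssocSemiring A] [Module k A] [SMulCommClass k A A] [IsScalarTower k A A]
    [NonUnitalNonAssocSemiring B] [Module k B] [SMulCommClass k B B] [IsScalarTower k B B]
    {γ : Module.End k A} {δ : Module.End k B} (hγ : γ ∈ centroid k A)
    (hδ : δ ∈ centroid k B) : TensorProduct.map γ δ ∈ centroid k (A ⊗[k] B) := by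
  set m := TensorProduct.map γ δ
  have hleft : (LinearMap.mul k (A ⊗[k] B)).compr₂ m = (LinearMap.mul k _).comp m :=
    TensorProduct.ext' fun a b => TensorProduct.ext' fun a' b' => by
      simp [m, (hγ a a').1, (hδ b b').1]
  have hright : (LinearMap.mul k (A ⊗[k] B)).compr₂ m = (LinearMap.mul k _).compl₂ m :=
    TensorProduct.ext' fun a b => TensorProduct.ext' fun a' b' => by
      simp [m, (hγ a a').2, (hδ b b').2]
  exact fun z w => ⟨LinearMap.congr_fun₂ hleft z w, LinearMap.congr_fun₂ hright z w⟩

theorem equivFinsuppOfBasisRight_rTensor {k A S ι : Type} [Field k] [AddCommMonoid A]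
    [Module k A] [AddCommMonoid S] [Module k S] [DecidableEq ι] (b : Module.Basis ι k S)
    (f : A →ₗ[k] A) (z : A ⊗[k] S) (i : ι) :
    TensorProduct.equivFinsuppOfBasisRight b (f.rTensor S z) i =
      f (TensorProduct.equivFinsuppOfBasisRight b z i) := by
  induction z using TensorProduct.induction_on with
  | zero => simp
  | tmul a s => simp
  | add z w hz hw => simp only [map_add, Finsupp.add_apply, hz, hw]

section TensorOne

variable {k A S : Type} [Field k] [NonUnitalNonAssocSemiring A] [Module k A]
  [SMulCommClass k A A] [IsScalarTower k A A] [Semiring S] [Algebra k S]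

theorem mul_tmul_one (z : A ⊗[k] S) (y : A) :
    z * (y ⊗ₜ (1 : S)) = (LinearMap.mulRight k y).rTensor S z := by
  induction z using TensorProduct.induction_on with
  | zero => simp
  | tmul a s => simp
  | add z w hz hw => rw [add_mul, hz, hw, map_add]

theorem tmul_one_mul (x : A) (z : A ⊗[k] S) :
    (x ⊗ₜ (1 : S)) * z = (LinearMap.mulLeft k x).rTensor S z := by
  induction z using TensorProduct.induction_on with
  | zero => simp
  | tmul a s => simp
  | add z w hz hw => rw [mul_add, hz, hw, map_add]

theorem mulRight_equivFinsuppOfBasisRight_mem_centroid {ι : Type} [DecidableEq ι]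
    (b : Module.Basis ι k S) {c : A ⊗[k] S}
    (hc : LinearMap.mulRight k c ∈ centroid k (A ⊗[k] S)) (i : ι) :
    LinearMap.mulRight k (TensorProduct.equivFinsuppOfBasisRight b c i) ∈ centroid k A := by
  intro x y
  obtain ⟨hleft, hright⟩ := hc (x ⊗ₜ 1) (y ⊗ₜ 1)
  simp only [LinearMap.mulRight_apply, Algebra.TensorProduct.tmul_mul_tmul, mul_one]
    at hleft hright
  simp only [tmul_one_mul, mul_tmul_one] at hleft hright
  constructor
  · simpa [equivFinsuppOfBasisRight_rTensor] using
      congrArg (TensorProduct.equivFinsuppOfBasisRight b · i) hleft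
  · simpa [equivFinsuppOfBasisRight_rTensor] using
      congrArg (TensorProduct.equivFinsuppOfBasisRight b · i) hright

end TensorOne

theorem mem_range_rTensor_centroidEvalOne {k A S : Type} [Field k] [NonAssocSemiring A]
    [Module k A] [SMulCommClass k A A] [IsScalarTower k A A] [Ring S] [Algebra k S]
    {c : A ⊗[k] S} (hc : LinearMap.mulRight k c ∈ centroid k (A ⊗[k] S)) :
    c ∈ LinearMap.range ((centroidEvalOne k A).rTensor S) := by
  classical
  let b := Module.Basis.ofVectorSpace k S
  let e := TensorProduct.equivFinsuppOfBasisRight (M := A) b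
  rw [← e.symm_apply_apply c, TensorProduct.equivFinsuppOfBasisRight_symm_apply, Finsupp.sum]
  refine Submodule.sum_mem _ fun i _ =>
    ⟨⟨_, mulRight_equivFinsuppOfBasisRight_mem_centroid b hc i⟩ ⊗ₜ b i, ?_⟩
  simp [e]

section Psi

variable {k A S : Type} [Field k] [NonUnitalNonAssocRing A] [Module k A]
  [SMulCommClass k A A] [IsScalarTower k A A] [CommRing S] [Algebra k S]

variable (k A S) in
def psiAlgHom : centroid k A ⊗[k] S →ₐ[k] Module.End k (A ⊗[k] S) :=
  (Module.endTensorEndAlgHom (R := k) (S := k) (A := k)).comp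
    (Algebra.TensorProduct.map (centroid k A).val (Algebra.lmul k S))

theorem psiAlgHom_apply (u : centroid k A ⊗[k] S) : psiAlgHom k A S u = psi k A S u :=
  LinearMap.congr_fun (TensorProduct.ext' fun _ _ => rfl :
    (psiAlgHom k A S).toLinearMap = psi k A S) u

theorem psi_mul (u v : centroid k A ⊗[k] S) :
    psi k A S (u * v) = psi k A S u * psi k A S v := by
  simp only [← psiAlgHom_apply, map_mul]

theorem psi_one : psi k A S 1 = 1 := by
  rw [← psiAlgHom_apply, map_one]

theorem psi_tmul (γ : centroid k A) (s : S) :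
    psi k A S (γ ⊗ₜ s) = TensorProduct.map (γ : Module.End k A) (LinearMap.mulLeft k s) :=
  rfl

theorem psi_mem_centroid (u : centroid k A ⊗[k] S) : psi k A S u ∈ centroid k (A ⊗[k] S) := by
  induction u using TensorProduct.induction_on with
  | zero => simpa only [map_zero] using zero_mem _
  | tmul γ s => exact map_mem_centroid γ.2 (mulLeft_mem_centroid s)
  | add u v hu hv => simpa only [map_add] using add_mem hu hv

end Psi

section UnitalPsi

variable {k A S : Type} [Field k] [NonAssocRing A] [Module k A]
  [SMulCommClass k A A] [IsScalarTower k A A] [CommRing S] [Algebra k S]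

theorem psi_apply_one (u : centroid k A ⊗[k] S) :
    psi k A S u 1 = (centroidEvalOne k A).rTensor S u := by
  induction u using TensorProduct.induction_on with
  | zero => simp
  | tmul γ s => simp [psi_tmul, Algebra.TensorProduct.one_def]
  | add u v hu hv => simp only [map_add, LinearMap.add_apply, hu, hv]

theorem psi_injective : Function.Injective (psi k A S) := fun u v h =>
  Module.Flat.rTensor_preserves_injective_linearMap _ centroidEvalOne_injective <| by
    rw [← psi_apply_one, ← psi_apply_one, h]

theorem mem_range_psi_of_mem_centroid {T : Module.End k (A ⊗[k] S)}
    (hT : T ∈ centroid k (A ⊗[k] S)) : T ∈ LinearMap.range (psi k A S) := by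
  obtain ⟨u, hu⟩ := mem_range_rTensor_centroidEvalOne (eq_mulRight_of_mem_centroid hT ▸ hT)
  exact ⟨u, eq_of_mem_centroid_of_apply_one (psi_mem_centroid u) hT (by rw [psi_apply_one, hu])⟩

end UnitalPsi

/-- Lemma 1.1(iv): if `A` is a unital (possibly non-associative) algebra and `S` is a
commutative associative unital algebra, then `ψ : C(A) ⊗ S → C(A ⊗ S)` is an isomorphism of
associative algebras. -/
theorem psi_isomorphism_of_unital
    (k A S : Type) [Field k] [NonAssocRing A] [Module k A]
    [SMulCommClass k A A] [IsScalarTower k A A] [CommRing S] [Algebra k S] :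
    Function.Injective (psi k A S) ∧
      (∀ x y : ↥(centroid k A) ⊗[k] S, psi k A S (x * y) = psi k A S x * psi k A S y) ∧
      psi k A S 1 = 1 ∧
      (∀ T : Module.End k (A ⊗[k] S),
        T ∈ LinearMap.range (psi k A S) ↔ T ∈ centroid k (A ⊗[k] S)) := by
  refine ⟨psi_injective, psi_mul, psi_one, fun T => ⟨?_, mem_range_psi_of_mem_centroid⟩⟩
  rintro ⟨u, rfl⟩
  exact psi_mem_centroid u

end
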